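/- arXiv:1102.1717 — 3 statements merged into one kernel-verified Lean document; each statement's English description precedes it below -/
import Mathlib

section
/- Let K be a field, let n ≥ 1 and g ≥ 1 be integers, and let ξ ∈ K× be an element of multiplicative order exactly n. Suppose A₁,B₁,…,A_g,B_g ∈ GL_n(K) satisfy [A₁,B₁][A₂,B₂]⋯[A_g,B_g] = ξ·I_n. Then the only K-linear subspaces W ⊆ K^n with Aᵢ(W) ⊆ W and Bᵢ(W) ⊆ W for all i = 1,…,g are W = {0} and W = K^n; that is, the tuple has no common nontrivial invariant subspace. -/
open Matrix
open scoped commutatorElement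

section Aux

variable {K : Type} [Field K] {n : ℕ} (W : Submodule K (Fin n → K))

/-- The linear equivalence of `K^n` given by an element of `GL n K`. -/
noncomputable def glEquiv (M : GL (Fin n) K) : (Fin n → K) ≃ₗ[K] (Fin n → K) :=
  LinearEquiv.ofLinear (Matrix.toLin' (M : Matrix (Fin n) (Fin n) K))
    (Matrix.toLin' ((M⁻¹ : GL (Fin n) K) : Matrix (Fin n) (Fin n) K))
    (by rw [← Matrix.toLin'_mul, ← Units.val_mul, mul_inv_cancel]; simp)
    (by rw [← Matrix.toLin'_mul, ← Units.val_mul, inv_mul_cancel]; simp)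

/-- The subgroup of `GL n K` stabilizing a subspace `W`. -/
def invStab : Subgroup (GL (Fin n) K) where
  carrier := {M | Submodule.map (Matrix.toLin' (M : Matrix (Fin n) (Fin n) K)) W = W}
  one_mem' := by simp
  mul_mem' := by
    intro a b ha hb
    simp only [Set.mem_setOf_eq] at *
    rw [Units.val_mul, Matrix.toLin'_mul, Submodule.map_comp, hb, ha]
  inv_mem' := by
    intro a ha
    simp only [Set.mem_setOf_eq] at *
    conv_lhs => rw [← ha]
    rw [← Submodule.map_comp, ← Matrix.toLin'_mul, ← Units.val_mul, inv_mul_cancel]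
    simp

theorem mem_invStab_of_le {M : GL (Fin n) K}
    (h : ∀ x ∈ W, (M : Matrix (Fin n) (Fin n) K) *ᵥ x ∈ W) : M ∈ invStab W := by
  have hle : Submodule.map (Matrix.toLin' (M : Matrix (Fin n) (Fin n) K)) W ≤ W := by
    rintro _ ⟨x, hx, rfl⟩
    simpa [Matrix.toLin'_apply] using h x hx
  refine Submodule.eq_of_le_of_finrank_le hle ?_
  exact (LinearEquiv.finrank_map_eq (glEquiv M) W).ge

theorem mem_invStab_apply {M : GL (Fin n) K} (hM : M ∈ invStab W) {x : Fin n → K} (hx : x ∈ W) :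
    Matrix.toLin' (M : Matrix (Fin n) (Fin n) K) x ∈ W := by
  rw [← hM]
  exact Submodule.mem_map_of_mem hx

/-- Restriction of a stabilizing element to `W`, as a unit of `End W`. -/
noncomputable def restrictUnit (M : invStab W) : (W →ₗ[K] W)ˣ where
  val := (Matrix.toLin' ((M : GL (Fin n) K) : Matrix (Fin n) (Fin n) K)).restrict
    (fun x hx => mem_invStab_apply W M.2 hx)
  inv := (Matrix.toLin' (((M : GL (Fin n) K)⁻¹ : GL (Fin n) K) : Matrix (Fin n) (Fin n) K)).restrict
    (fun x hx => mem_invStab_apply W (inv_mem M.2) hx)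
  val_inv := by
    ext x
    simp only [Module.End.mul_apply, LinearMap.restrict_apply, Module.End.one_apply,
      ← Matrix.toLin'_mul_apply, ← Units.val_mul, mul_inv_cancel]
    simp
  inv_val := by
    ext x
    simp only [Module.End.mul_apply, LinearMap.restrict_apply, Module.End.one_apply,
      ← Matrix.toLin'_mul_apply, ← Units.val_mul, inv_mul_cancel]
    simp

/-- The determinant of the restriction to `W`, as a group hom `invStab W →* Kˣ`. -/
noncomputable def detRestrict : invStab W →* Kˣ where
  toFun M := Units.map LinearMap.det (restrictUnit W M)
  map_one' := by
    apply Units.ext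
    have : (restrictUnit W 1).val = 1 := by
      ext x
      simp [restrictUnit, LinearMap.restrict_apply]
    simp [this]
  map_mul' := by
    intro a b
    apply Units.ext
    have : (restrictUnit W (a * b)).val = (restrictUnit W a).val * (restrictUnit W b).val := by
      ext x
      simp [restrictUnit, LinearMap.restrict_apply, Matrix.toLin'_mul_apply]
    simp [this]

end Aux

/-- If `ξ ∈ K×` has multiplicative order exactly `n` and
`A₁,B₁,…,A_g,B_g ∈ GL_n(K)` satisfy `[A₁,B₁]⋯[A_g,B_g] = ξ·I_n`, then the tuple has no
common nontrivial invariant subspace: any subspace `W ⊆ K^n` invariant under all the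
`Aᵢ` and `Bᵢ` is `{0}` or `K^n`. -/
theorem no_common_invariant_subspace (K : Type) [Field K] (n g : ℕ) (hn : 1 ≤ n)
    (hg : 1 ≤ g) (ξ : Kˣ) (hξ : orderOf ξ = n)
    (A B : Fin g → Matrix.GeneralLinearGroup (Fin n) K)
    (hrel : ((List.ofFn fun i => ⁅A i, B i⁆).prod : Matrix (Fin n) (Fin n) K) =
      (ξ : K) • (1 : Matrix (Fin n) (Fin n) K))
    (W : Submodule K (Fin n → K))
    (hA : ∀ i : Fin g, ∀ x ∈ W, (A i : Matrix (Fin n) (Fin n) K) *ᵥ x ∈ W)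
    (hB : ∀ i : Fin g, ∀ x ∈ W, (B i : Matrix (Fin n) (Fin n) K) *ᵥ x ∈ W) :
    W = ⊥ ∨ W = ⊤ := by
  classical
  have hAmem : ∀ i, A i ∈ invStab W := fun i => mem_invStab_of_le W (hA i)
  have hBmem : ∀ i, B i ∈ invStab W := fun i => mem_invStab_of_le W (hB i)
  set a : Fin g → invStab W := fun i => ⟨A i, hAmem i⟩
  set b : Fin g → invStab W := fun i => ⟨B i, hBmem i⟩
  set P : invStab W := (List.ofFn fun i => ⁅a i, b i⁆).prod with hP
  have hPval : ((P : GL (Fin n) K) : Matrix (Fin n) (Fin n) K)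
      = (ξ : K) • (1 : Matrix (Fin n) (Fin n) K) := by
    have h2 : (P : GL (Fin n) K) = (List.ofFn fun i => ⁅A i, B i⁆).prod := by
      rw [show (P : GL (Fin n) K) = (invStab W).subtype P from rfl, hP, map_list_prod,
        List.map_ofFn]
      rfl
    rw [h2, hrel]
  -- χ(P) = 1 since it is a product of commutators into the abelian group Kˣ
  have h1 : detRestrict W P = 1 := by
    rw [hP, map_list_prod]
    apply List.prod_eq_one
    intro u hu
    simp only [List.map_map, List.mem_map, List.mem_ofFn] at hu
    obtain ⟨x, ⟨⟨i, hi⟩, hu⟩⟩ := hu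
    rw [← hu, ← hi]
    simp only [Function.comp_apply, map_commutatorElement]
    exact commutatorElement_eq_one_iff_mul_comm.2 (mul_comm _ _)
  -- compute χ(P) = ξ ^ finrank W
  have hval : ((detRestrict W P : Kˣ) : K) = (ξ : K) ^ (Module.finrank K W) := by
    have hres : (restrictUnit W P).val = (ξ : K) • (LinearMap.id : W →ₗ[K] W) := by
      apply LinearMap.ext
      intro x
      apply Subtype.ext
      show Matrix.toLin' ((P : GL (Fin n) K) : Matrix (Fin n) (Fin n) K) x.val
        = (ξ : K) • x.val
      rw [hPval]
      simp [Matrix.toLin'_apply, Matrix.smul_mulVec]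
    have h3 : ((detRestrict W P : Kˣ) : K) = LinearMap.det (restrictUnit W P).val := rfl
    rw [h3, hres, LinearMap.det_smul, LinearMap.det_id, mul_one]
  have hpow : ξ ^ (Module.finrank K W) = 1 := by
    apply Units.ext
    rw [Units.val_pow_eq_pow_val, ← hval, h1, Units.val_one]
  have hdvd : n ∣ Module.finrank K W := by
    have := orderOf_dvd_of_pow_eq_one hpow
    rwa [hξ] at this
  have hle : Module.finrank K W ≤ n := by
    simpa using Submodule.finrank_le W
  rcases Nat.eq_zero_or_pos (Module.finrank K W) with h0 | hpos
  · left
    exact Submodule.finrank_eq_zero.mp h0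
  · right
    have hfr : Module.finrank K W = n := Nat.le_antisymm hle (Nat.le_of_dvd hpos hdvd)
    apply Submodule.eq_top_of_finrank_eq
    simpa using hfr
end

section
/- Let K be a field, let n ≥ 1 and g ≥ 1 be integers, and let ξ ∈ K× be an element of multiplicative order exactly n. Suppose A₁,B₁,…,A_g,B_g ∈ GL_n(K) satisfy [A₁,B₁][A₂,B₂]⋯[A_g,B_g] = ξ·I_n. Then every n×n matrix C over K that commutes with all of A₁,B₁,…,A_g,B_g is a scalar matrix: C = λ·I_n for some λ ∈ K. In particular, the stabilizer of such a tuple under the simultaneous conjugation action of GL_n(K) consists exactly of the scalar matrices, so the induced action of PGL_n(K) on the set of such tuples is free. -/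
open Matrix
open scoped commutatorElement
set_option maxHeartbeats 1000000

section Aux

variable {F V : Type*} [Field F] [AddCommGroup V] [Module F V]

/-- The submonoid of endomorphisms preserving a submodule `E`. -/
def invariantSubmonoid (E : Submodule F V) : Submonoid (Module.End F V) where
  carrier := {f | ∀ x ∈ E, f x ∈ E}
  one_mem' := fun x hx => hx
  mul_mem' := fun {f g} hf hg x hx => hf _ (hg _ hx)

lemma mem_invariantSubmonoid {E : Submodule F V} {f : Module.End F V} :
    f ∈ invariantSubmonoid E ↔ ∀ x ∈ E, f x ∈ E := Iff.rfl

/-- Restriction to an invariant submodule, as a monoid hom. -/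
def resHom (E : Submodule F V) : invariantSubmonoid E →* Module.End F E where
  toFun f := LinearMap.restrict f.1 f.2
  map_one' := LinearMap.ext fun x => Subtype.ext <| by
    simp [LinearMap.restrict_coe_apply]
  map_mul' f g := LinearMap.ext fun x => Subtype.ext <| by
    simp [LinearMap.restrict_coe_apply, Module.End.mul_apply]
    rfl

end Aux

/-- If `ξ ∈ K×` has multiplicative order exactly `n` and
`A₁,B₁,…,A_g,B_g ∈ GL_n(K)` satisfy `[A₁,B₁]⋯[A_g,B_g] = ξ·I_n`, then any `n×n` matrix `C`
commuting with all the `Aᵢ` and `Bᵢ` is a scalar matrix `C = λ·I_n`. -/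
theorem commutant_eq_scalars (K : Type) [Field K] (n g : ℕ) (hn : 1 ≤ n)
    (hg : 1 ≤ g) (ξ : Kˣ) (hξ : orderOf ξ = n)
    (A B : Fin g → Matrix.GeneralLinearGroup (Fin n) K)
    (hrel : ((List.ofFn fun i => ⁅A i, B i⁆).prod : Matrix (Fin n) (Fin n) K) =
      (ξ : K) • (1 : Matrix (Fin n) (Fin n) K))
    (C : Matrix (Fin n) (Fin n) K)
    (hCA : ∀ i : Fin g, C * (A i : Matrix (Fin n) (Fin n) K) =
      (A i : Matrix (Fin n) (Fin n) K) * C)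
    (hCB : ∀ i : Fin g, C * (B i : Matrix (Fin n) (Fin n) K) =
      (B i : Matrix (Fin n) (Fin n) K) * C) :
    ∃ l : K, C = l • (1 : Matrix (Fin n) (Fin n) K) := by
  classical
  set L := AlgebraicClosure K
  let φ : K →+* L := algebraMap K L
  let f : Matrix (Fin n) (Fin n) K →+* Matrix (Fin n) (Fin n) L := φ.mapMatrix
  let e : Matrix (Fin n) (Fin n) L ≃ₐ[L] Module.End L (Fin n → L) := Matrix.toLinAlgEquiv'
  haveI : Nonempty (Fin n) := ⟨⟨0, hn⟩⟩
  let T : Module.End L (Fin n → L) := e (f C)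
  obtain ⟨μ, hμ⟩ := Module.End.exists_eigenvalue T
  set E := T.eigenspace μ with hE
  -- any matrix commuting with C over K gives an element of the invariant submonoid
  have key : ∀ X : Matrix (Fin n) (Fin n) K, Commute C X →
      e (f X) ∈ invariantSubmonoid E := by
    intro X hX
    have hc : Commute T (e (f X)) := by
      show e (f C) * e (f X) = e (f X) * e (f C)
      rw [← _root_.map_mul e, ← _root_.map_mul e, ← _root_.map_mul f, ← _root_.map_mul f, hX.eq]
    intro x hx
    exact T.mapsTo_genEigenspace_of_comm hc μ 1 hx
  -- bundled elements
  let a : Fin g → invariantSubmonoid E := fun i =>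
    ⟨e (f (A i : Matrix (Fin n) (Fin n) K)), key _ (hCA i)⟩
  let a' : Fin g → invariantSubmonoid E := fun i =>
    ⟨e (f ((A i)⁻¹ : Matrix.GeneralLinearGroup (Fin n) K)), key _ (Commute.units_inv_right (show Commute C ↑(A i) from hCA i))⟩
  let b : Fin g → invariantSubmonoid E := fun i =>
    ⟨e (f (B i : Matrix (Fin n) (Fin n) K)), key _ (hCB i)⟩
  let b' : Fin g → invariantSubmonoid E := fun i =>
    ⟨e (f ((B i)⁻¹ : Matrix.GeneralLinearGroup (Fin n) K)), key _ (Commute.units_inv_right (show Commute C ↑(B i) from hCB i))⟩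
  have ha1 : ∀ i, a i * a' i = 1 := by
    intro i
    apply Subtype.ext
    show e (f _) * e (f _) = 1
    rw [← _root_.map_mul e, ← _root_.map_mul f, ← Units.val_mul, mul_inv_cancel, Units.val_one, _root_.map_one f, _root_.map_one e]
  have hb1 : ∀ i, b i * b' i = 1 := by
    intro i
    apply Subtype.ext
    show e (f _) * e (f _) = 1
    rw [← _root_.map_mul e, ← _root_.map_mul f, ← Units.val_mul, mul_inv_cancel, Units.val_one, _root_.map_one f, _root_.map_one e]
  let c : Fin g → invariantSubmonoid E := fun i => a i * b i * a' i * b' i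
  let M : Fin g → Matrix (Fin n) (Fin n) K := fun i =>
    (A i : Matrix (Fin n) (Fin n) K) * (B i : Matrix (Fin n) (Fin n) K) *
      (((A i)⁻¹ : GL (Fin n) K) : Matrix (Fin n) (Fin n) K) *
      (((B i)⁻¹ : GL (Fin n) K) : Matrix (Fin n) (Fin n) K)
  -- the matrix relation over K, with the commutator spelled out
  have hrelK : (List.ofFn M).prod = (ξ : K) • (1 : Matrix (Fin n) (Fin n) K) := by
    rw [← hrel]
    rw [← Units.coeHom_apply, map_list_prod, List.map_ofFn]
    simp [M, commutatorElement_def, Function.comp_def]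
  -- transport to the scalar matrix element of the submonoid
  have hscal_mem : (φ (ξ : K)) • (1 : Module.End L (Fin n → L)) ∈ invariantSubmonoid E := by
    intro x hx
    exact E.smul_mem _ (by simpa using hx)
  have hsmul1 : f ((ξ : K) • (1 : Matrix (Fin n) (Fin n) K)) =
      φ (ξ : K) • (1 : Matrix (Fin n) (Fin n) L) := by
    ext i j
    simp [f, RingHom.mapMatrix_apply, Matrix.map_apply, Matrix.smul_apply, Matrix.one_apply,
      apply_ite φ]
  let ef : Matrix (Fin n) (Fin n) K →+* Module.End L (Fin n → L) :=
    (e.toAlgHom.toRingHom).comp f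
  have hprod : (List.ofFn c).prod = ⟨(φ (ξ : K)) • (1 : Module.End L (Fin n → L)), hscal_mem⟩ := by
    apply Subtype.ext
    rw [SubmonoidClass.coe_list_prod, List.map_ofFn]
    have hfn : (Subtype.val ∘ c) = ef ∘ M := by
      funext i
      show ((a i : Module.End L (Fin n → L)) * b i * a' i * b' i) = ef (M i)
      simp only [M, ef, RingHom.coe_comp, Function.comp_apply, _root_.map_mul]
      rfl
    rw [hfn, ← List.map_ofFn, ← map_list_prod ef, hrelK]
    show e (f _) = _
    rw [hsmul1, _root_.map_smul, _root_.map_one]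
  -- determinant of the restriction
  let δ : invariantSubmonoid E →* L := (LinearMap.det).comp (resHom E)
  have hδc : ∀ i, δ (c i) = 1 := by
    intro i
    have hA : δ (a i) * δ (a' i) = 1 := by rw [← _root_.map_mul δ, ha1 i, _root_.map_one]
    have hB : δ (b i) * δ (b' i) = 1 := by rw [← _root_.map_mul δ, hb1 i, _root_.map_one]
    have : δ (c i) = δ (a i) * δ (b i) * δ (a' i) * δ (b' i) := by
      simp only [c, _root_.map_mul]
    rw [this]
    calc δ (a i) * δ (b i) * δ (a' i) * δ (b' i)
        = (δ (a i) * δ (a' i)) * (δ (b i) * δ (b' i)) := by ring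
      _ = 1 := by rw [hA, hB, one_mul]
  have hδprod : δ ((List.ofFn c).prod) = 1 := by
    rw [map_list_prod δ, List.map_ofFn]
    apply List.prod_eq_one
    intro x hx
    obtain ⟨i, rfl⟩ := List.mem_ofFn.mp hx
    exact hδc i
  set d := Module.finrank L E with hd
  have hξd : φ (ξ : K) ^ d = 1 := by
    have h2 : δ ⟨(φ (ξ : K)) • (1 : Module.End L (Fin n → L)), hscal_mem⟩ = φ (ξ : K) ^ d := by
      have hres : resHom E ⟨(φ (ξ : K)) • (1 : Module.End L (Fin n → L)), hscal_mem⟩ =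
          (φ (ξ : K)) • (1 : Module.End L E) := rfl
      show LinearMap.det (resHom E ⟨(φ (ξ : K)) • (1 : Module.End L (Fin n → L)), hscal_mem⟩) = _
      rw [hres, LinearMap.det_smul, MonoidHom.map_one LinearMap.det, mul_one]
    rw [← h2, ← hprod, hδprod]
  -- deduce d = n
  have hξdK : ξ ^ d = 1 := by
    apply Units.ext
    have : φ ((ξ : K) ^ d) = φ 1 := by rw [_root_.map_pow, hξd, _root_.map_one]
    simpa using φ.injective this
  have hnd : n ∣ d := hξ ▸ orderOf_dvd_of_pow_eq_one hξdK
  have hdn : d ≤ n := by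
    have := Submodule.finrank_le E
    rwa [Module.finrank_fin_fun] at this
  have hd0 : 0 < d := by
    haveI : Nontrivial E := Submodule.nontrivial_iff_ne_bot.mpr hμ
    exact Module.finrank_pos
  have hdn' : d = n := le_antisymm hdn (Nat.le_of_dvd hd0 hnd)
  have hEtop : E = ⊤ := Submodule.eq_top_of_finrank_eq (by rw [← hd, hdn', Module.finrank_fin_fun])
  -- conclude C is scalar
  have hT : e (f C) = μ • (1 : Module.End L (Fin n → L)) := by
    apply LinearMap.ext
    intro x
    have hx : x ∈ E := hEtop ▸ Submodule.mem_top
    simpa using Module.End.mem_eigenspace_iff.mp hx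
  have hfC : f C = μ • (1 : Matrix (Fin n) (Fin n) L) := by
    apply e.injective
    rw [hT, _root_.map_smul, _root_.map_one]
  have hentry : ∀ i j, φ (C i j) = if i = j then μ else 0 := by
    intro i j
    have h := congrFun (congrFun hfC i) j
    simpa [f, RingHom.mapMatrix_apply, Matrix.map_apply, Matrix.smul_apply, Matrix.one_apply,
      mul_ite, mul_one, mul_zero] using h
  let i0 : Fin n := ⟨0, hn⟩
  have hμval : μ = φ (C i0 i0) := by rw [hentry i0 i0]; simp
  refine ⟨C i0 i0, ?_⟩
  ext i j
  apply φ.injective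
  rw [hentry i j]
  by_cases hij : i = j <;>
    simp [hij, Matrix.smul_apply, Matrix.one_apply, ← hμval]
end

section
/- Let G be a finite group, g a natural number, z ∈ G, and k a positive integer with gcd(k, |G|) = 1. Then the number of 2g-tuples (a₁,b₁,…,a_g,b_g) ∈ G^{2g} with [a₁,b₁]⋯[a_g,b_g] = z equals the number of 2g-tuples with [a₁,b₁]⋯[a_g,b_g] = z^k. -/
set_option linter.unusedSectionVars false

open Finset MonoidAlgebra
open scoped commutatorElement

namespace CommCount

variable {G : Type} [Group G] [Fintype G] [DecidableEq G] {p : ℕ}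

/-- Sum of `single (h i) 1` over a finite index type. -/
noncomputable def SS {ι : Type} [Fintype ι] (h : ι → G) : MonoidAlgebra (ZMod p) G :=
  ∑ i : ι, MonoidAlgebra.single (h i) 1

/-- ordered product of `h (f j)`. -/
def Pd {ι : Type} (h : ι → G) (m : ℕ) (f : Fin m → ι) : G :=
  (List.ofFn fun j => h (f j)).prod

lemma SS_apply {ι : Type} [Fintype ι] [DecidableEq ι] (h : ι → G) (z : G) :
    (SS (p := p) h).coeff z = ((univ.filter fun i => h i = z).card : ZMod p) := by
  classical
  rw [SS, Finset.card_filter]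
  rw [MonoidAlgebra.coeff_sum, Finsupp.finset_sum_apply]
  push_cast
  refine Finset.sum_congr rfl fun i _ => ?_
  rw [MonoidAlgebra.coeff_single, Finsupp.single_apply]

lemma SS_sum_filter {ι : Type} [Fintype ι] [DecidableEq ι] (h : ι → G) (D : Finset G) :
    (∑ w ∈ D, (SS (p := p) h).coeff w) = ((univ.filter fun i => h i ∈ D).card : ZMod p) := by
  classical
  simp_rw [SS_apply, Finset.card_filter]
  push_cast
  rw [Finset.sum_comm]
  refine Finset.sum_congr rfl fun i _ => ?_
  simp [Finset.sum_ite_eq' D (h i) (fun _ => (1 : ZMod p))]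

lemma SS_pow {ι : Type} [Fintype ι] (h : ι → G) (m : ℕ) :
    (SS (p := p) h) ^ m = SS (fun f : Fin m → ι => Pd h m f) := by
  induction m with
  | zero =>
      rw [pow_zero, SS]
      rw [Fintype.sum_subsingleton _ (fun i : Fin 0 => i.elim0)]
      simp [Pd, MonoidAlgebra.one_def]
  | succ m ih =>
      rw [pow_succ', ih]
      rw [show (SS (p := p) fun f : Fin (m+1) → ι => Pd h (m+1) f)
          = ∑ q : Fin (m+1) → ι, MonoidAlgebra.single (Pd h (m+1) q) (1 : ZMod p) from rfl]
      rw [SS, SS, Finset.sum_mul_sum]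
      simp_rw [MonoidAlgebra.single_mul_single, one_mul]
      rw [← ((Fin.consEquiv (fun _ : Fin (m+1) => ι)).sum_comp
        (fun q => MonoidAlgebra.single (Pd h (m+1) q) (1 : ZMod p)))]
      rw [Fintype.sum_prod_type]
      refine Finset.sum_congr rfl fun i _ => Finset.sum_congr rfl fun f _ => ?_
      congr 1
      show h i * Pd h m f = Pd h (m + 1) (Fin.cons i f)
      simp only [Pd, List.ofFn_succ, Fin.cons_zero, Fin.cons_succ, List.prod_cons]


/-- Orbit counting for a permutation of order dividing `p`. -/
lemma card_modEq_card_fixed {S : Type} [Finite S] (hp : p.Prime) (σ : Equiv.Perm S)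
    (hσ : σ ^ p = 1) : Nat.card S ≡ Nat.card {x : S // σ x = x} [MOD p] := by
  haveI := Fact.mk hp
  have hPG : IsPGroup p (Subgroup.zpowers σ) := by
    intro g
    refine ⟨1, ?_⟩
    obtain ⟨n, hn⟩ := g.2
    apply Subtype.ext
    rw [SubgroupClass.coe_pow, OneMemClass.coe_one]
    rw [← hn, pow_one, ← zpow_natCast, ← zpow_mul, mul_comm, zpow_mul, zpow_natCast, hσ, one_zpow]
  have key := IsPGroup.card_modEq_card_fixedPoints (α := S) hPG
  have hcard : Nat.card (MulAction.fixedPoints (Subgroup.zpowers σ) S) =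
      Nat.card {x : S // σ x = x} := by
    apply Nat.card_congr
    refine Equiv.subtypeEquivRight fun x => ?_
    constructor
    · intro hx
      exact hx ⟨σ, Subgroup.mem_zpowers σ⟩
    · intro hx g
      obtain ⟨n, hn⟩ := g.2
      show (g : Equiv.Perm S) x = x
      rw [← hn]
      have hinv : (σ⁻¹ : Equiv.Perm S) x = x := by
        conv_lhs => rw [← hx]
        simp
      have hfor : ∀ m : ℕ, (σ ^ m) x = x := by
        intro m
        induction m with
        | zero => simp
        | succ m ih => rw [pow_succ, Equiv.Perm.mul_apply, hx, ih]
      have hback : ∀ m : ℕ, ((σ⁻¹) ^ m) x = x := by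
        intro m
        induction m with
        | zero => simp
        | succ m ih => rw [pow_succ, Equiv.Perm.mul_apply, hinv, ih]
      obtain ⟨m, rfl | rfl⟩ := Int.eq_nat_or_neg n
      · show (σ ^ (m : ℤ)) x = x
        rw [zpow_natCast]; exact hfor m
      · show (σ ^ (-(m : ℤ))) x = x
        rw [zpow_neg, ← inv_zpow, zpow_natCast]; exact hback m
  rwa [hcard] at key

lemma replicate_of_rotate {α : Type} : ∀ (t : List α) (a : α),
    t ++ [a] = a :: t → t = List.replicate t.length a := by
  intro t
  induction t with
  | nil => intro a _; rfl
  | cons b t' ih =>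
      intro a hyp
      simp only [List.cons_append, List.cons.injEq] at hyp
      obtain ⟨rfl, hyp2⟩ := hyp
      have := ih b hyp2
      simp [List.replicate_succ, ← this]


lemma rot_card (hp : p.Prime) {ι : Type} [Fintype ι] [DecidableEq ι] (h : ι → G) (Q : G → Prop)
    [DecidablePred Q] (hQ : ∀ u w, Q w ↔ Q (u * w * u⁻¹)) :
    (univ.filter fun f : Fin p → ι => Q (Pd h p f)).card ≡
      (univ.filter fun i : ι => Q ((h i) ^ p)).card [MOD p] := by
  classical
  have Qrot1 : ∀ l : List ι, Q ((l.map h).prod) → Q (((l.rotate 1).map h).prod) := by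
    intro l hl
    cases l with
    | nil => simpa using hl
    | cons a t =>
        rw [List.rotate_cons_succ, List.rotate_zero, List.map_append, List.prod_append]
        rw [List.map_cons, List.prod_cons] at hl
        have := (hQ (h a)⁻¹ _).mp hl
        simp only [inv_inv] at this
        have heq : (h a)⁻¹ * (h a * (t.map h).prod) * h a
            = (t.map h).prod * (List.map h [a]).prod := by
          simp [mul_assoc]
        rwa [heq] at this
  have Qrot : ∀ (n : ℕ) (l : List ι), Q ((l.map h).prod) → Q (((l.rotate n).map h).prod) := by
    intro n
    induction n with
    | zero => intro l hl; simpa using hl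
    | succ n ih =>
        intro l hl
        have h1 : l.rotate (n + 1) = (l.rotate 1).rotate n := by
          rw [List.rotate_rotate, Nat.add_comm]
        rw [h1]
        exact ih _ (Qrot1 l hl)
  -- the vector model
  set S := {v : List.Vector ι p // Q ((v.1.map h).prod)} with hS
  have e : {f : Fin p → ι // Q (Pd h p f)} ≃ S := by
    refine Equiv.subtypeEquiv (Equiv.vectorEquivFin ι p).symm fun f => ?_
    have : ((Equiv.vectorEquivFin ι p).symm f).1 = List.ofFn f :=
      List.Vector.toList_ofFn f
    rw [this, List.map_ofFn]
    rfl
  haveI : Finite S := Finite.of_equiv _ e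
  -- rotation of a vector
  have rotmem : ∀ (n : ℕ) (x : S), Q (((x.1.1.rotate n).map h).prod) := fun n x => Qrot n _ x.2
  have hlen : ∀ (n : ℕ) (x : S), (x.1.1.rotate n).length = p := by
    intro n x; rw [List.length_rotate, x.1.2]
  have hrr : ∀ (x : S) (m n : ℕ), m + n = p → (x.1.1.rotate m).rotate n = x.1.1 := by
    rintro ⟨⟨l, hlp⟩, hQx⟩ m n hmn
    show (l.rotate m).rotate n = l
    rw [List.rotate_rotate, hmn, ← hlp, List.rotate_length]
  have h1p : 1 + (p - 1) = p := by have := hp.pos; omega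
  have hp1 : (p - 1) + 1 = p := by have := hp.pos; omega
  set σ : Equiv.Perm S :=
    { toFun := fun x => ⟨⟨x.1.1.rotate 1, hlen 1 x⟩, rotmem 1 x⟩
      invFun := fun x => ⟨⟨x.1.1.rotate (p - 1), hlen (p - 1) x⟩, rotmem (p - 1) x⟩
      left_inv := fun x => Subtype.ext (Subtype.ext (hrr x 1 (p - 1) h1p))
      right_inv := fun x => Subtype.ext (Subtype.ext (hrr x (p - 1) 1 hp1)) } with hσdef
  have hσ_apply : ∀ (m : ℕ) (x : S), ((σ ^ m) x).1.1 = x.1.1.rotate m := by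
    intro m
    induction m with
    | zero => intro x; simp [List.rotate_zero]
    | succ m ih =>
        intro x
        rw [pow_succ, Equiv.Perm.mul_apply, ih (σ x)]
        show ((x.1.1 : List ι).rotate 1).rotate m = _
        rw [List.rotate_rotate, Nat.add_comm]
  have hσp : σ ^ p = 1 := by
    apply Equiv.ext
    rintro ⟨⟨l, hlp⟩, hQx⟩
    apply Subtype.ext
    apply Subtype.ext
    rw [hσ_apply p _]
    show l.rotate p = l
    rw [← hlp, List.rotate_length]
  have key := card_modEq_card_fixed hp σ hσp
  -- identify fixed points
  have φbij : Function.Bijective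
      (fun i : {i : ι // Q ((h i) ^ p)} =>
        (⟨⟨⟨List.replicate p i.1, List.length_replicate⟩, by
            rw [List.map_replicate, List.prod_replicate]; exact i.2⟩,
          Subtype.ext (Subtype.ext (List.rotate_replicate i.1 p 1))⟩ :
            {x : S // σ x = x})) := by
    constructor
    · intro i j hij
      apply Subtype.ext
      have : List.replicate p i.1 = List.replicate p j.1 := by
        have := congrArg (fun x => x.1.1.1) hij
        exact this
      exact List.replicate_right_injective hp.pos.ne' this
    · rintro ⟨x, hx⟩
      have hlrot : x.1.1.rotate 1 = x.1.1 := by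
        have := congrArg (fun y => y.1.1) hx
        exact this
      obtain ⟨l, hl⟩ : ∃ l : List ι, x.1.1 = l := ⟨x.1.1, rfl⟩
      have hlp : l.length = p := by rw [← hl]; exact x.1.2
      cases l with
      | nil =>
          exfalso
          have := hp.pos
          simp only [List.length_nil] at hlp
          omega
      | cons a t =>
          have hrot : t ++ [a] = a :: t := by
            have := hlrot
            rw [hl] at this
            rwa [List.rotate_cons_succ, List.rotate_zero] at this
          have ht : t = List.replicate t.length a := replicate_of_rotate t a hrot
          have hrepl : x.1.1 = List.replicate p a := by
            rw [hl]
            have : a :: t = List.replicate (t.length + 1) a := by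
              rw [List.replicate_succ, ← ht]
            rw [this, ← hlp]
            rfl
          have hQa : Q ((h a) ^ p) := by
            have := x.2
            rw [hrepl, List.map_replicate, List.prod_replicate] at this
            exact this
          exact ⟨⟨a, hQa⟩, Subtype.ext (Subtype.ext (Subtype.ext hrepl.symm))⟩
  have hfix : Nat.card {i : ι // Q ((h i) ^ p)} = Nat.card {x : S // σ x = x} :=
    Nat.card_eq_of_bijective _ φbij
  have hL : (univ.filter fun f : Fin p → ι => Q (Pd h p f)).card = Nat.card S := by
    rw [← Nat.card_congr e, Nat.card_eq_fintype_card, Fintype.card_subtype]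
  have hR : (univ.filter fun i : ι => Q ((h i) ^ p)).card
      = Nat.card {i : ι // Q ((h i) ^ p)} := by
    rw [Nat.card_eq_fintype_card, Fintype.card_subtype]
  rw [hL, hR, hfix]
  exact key


/-- conjugacy class as a Finset -/
def Cl (w₀ : G) : Finset G := univ.filter fun v => ∃ u : G, u * w₀ * u⁻¹ = v

lemma mem_Cl_iff {w₀ v : G} : v ∈ Cl w₀ ↔ ∃ u : G, u * w₀ * u⁻¹ = v := by
  simp [Cl]

lemma self_mem_Cl (w₀ : G) : w₀ ∈ Cl w₀ := mem_Cl_iff.mpr ⟨1, by simp⟩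

lemma Cl_conj_stable {w₀ : G} (u w : G) : w ∈ Cl w₀ ↔ u * w * u⁻¹ ∈ Cl w₀ := by
  simp only [mem_Cl_iff]
  constructor
  · rintro ⟨v, rfl⟩
    exact ⟨u * v, by group⟩
  · rintro ⟨v, hv⟩
    refine ⟨u⁻¹ * v, ?_⟩
    have hw : w = u⁻¹ * (v * w₀ * v⁻¹) * u := by rw [hv]; group
    rw [hw]
    group

lemma card_Cl_dvd (w₀ : G) : (Cl w₀).card ∣ Fintype.card G := by
  classical
  have e1 : {v : G // v ∈ Cl w₀} ≃ MulAction.orbit (ConjAct G) w₀ := by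
    refine Equiv.subtypeEquivRight fun v => ?_
    rw [mem_Cl_iff, MulAction.mem_orbit_iff]
    constructor
    · rintro ⟨u, hu⟩
      exact ⟨ConjAct.toConjAct u, by rw [ConjAct.smul_def]; simpa using hu⟩
    · rintro ⟨g, hg⟩
      exact ⟨ConjAct.ofConjAct g, by rw [ConjAct.smul_def] at hg; simpa using hg⟩
  have := MulAction.card_orbit_mul_card_stabilizer_eq_card_group (ConjAct G) w₀
  have hcardeq : (Cl w₀).card = Fintype.card (MulAction.orbit (ConjAct G) w₀) := by
    rw [← Fintype.card_coe]
    exact Fintype.card_congr e1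
  have hG : Fintype.card (ConjAct G) = Fintype.card G := rfl
  rw [hcardeq, ← hG]
  exact Dvd.intro _ this

section Algebra

variable (p)

/-- the commutator-sum element -/
noncomputable def Ec : MonoidAlgebra (ZMod p) G := SS (fun x : G × G => ⁅x.1, x.2⁆)

/-- orbit sums with multiplicity -/
noncomputable def T (b : G) : MonoidAlgebra (ZMod p) G := SS (fun a : G => a * b * a⁻¹)

variable {p}

/-- central elements -/
def IsCentral (X : MonoidAlgebra (ZMod p) G) : Prop := ∀ Y, Y * X = X * Y

lemma isCentral_of_single_comm {X : MonoidAlgebra (ZMod p) G}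
    (h : ∀ (w : G) (c : ZMod p), MonoidAlgebra.single w c * X = X * MonoidAlgebra.single w c) :
    IsCentral X := by
  intro Y
  have hY : Y = ∑ w ∈ Y.coeff.support, MonoidAlgebra.single w (Y.coeff w) :=
    (MonoidAlgebra.sum_coeff_single Y).symm
  rw [hY, Finset.sum_mul, Finset.mul_sum]
  exact Finset.sum_congr rfl fun w _ => h w (Y.coeff w)

lemma IsCentral.mul {X Y : MonoidAlgebra (ZMod p) G} (hX : IsCentral X) (hY : IsCentral Y) :
    IsCentral (X * Y) := by
  intro Z
  rw [← mul_assoc, hX Z, mul_assoc, hY Z, mul_assoc]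

lemma IsCentral.pow {X : MonoidAlgebra (ZMod p) G} (hX : IsCentral X) (m : ℕ) :
    IsCentral (X ^ m) := by
  induction m with
  | zero => intro Z; simp
  | succ m ih => rw [pow_succ]; exact ih.mul hX

lemma IsCentral.commute {X Y : MonoidAlgebra (ZMod p) G} (hX : IsCentral X) :
    Commute X Y := (hX Y).symm

/-- class-constant coefficients -/
def IsCC (X : MonoidAlgebra (ZMod p) G) : Prop := ∀ u w : G, X.coeff (u * w * u⁻¹) = X.coeff w

lemma IsCentral.isCC {X : MonoidAlgebra (ZMod p) G} (hX : IsCentral X) : IsCC X := by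
  intro u w
  have h := hX (MonoidAlgebra.single u 1)
  have h1 := congrArg (fun Z : MonoidAlgebra (ZMod p) G => Z.coeff (u * w)) h
  rw [MonoidAlgebra.coeff_single_mul_apply, MonoidAlgebra.coeff_mul_single_apply] at h1
  simp only [one_mul, mul_one] at h1
  rw [← h1]
  congr 1
  group

lemma isCentral_SS_of_conj {ι : Type} [Fintype ι] (h : ι → G)
    (hconj : ∀ w : G, ∃ π : Equiv.Perm ι, ∀ i, w * h i = h (π i) * w) :
    IsCentral (SS (p := p) h) := by
  apply isCentral_of_single_comm
  intro w c
  obtain ⟨π, hπ⟩ := hconj w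
  rw [SS, Finset.mul_sum, Finset.sum_mul]
  rw [← Equiv.sum_comp π
    (fun i => MonoidAlgebra.single (h i) (1 : ZMod p) * MonoidAlgebra.single w c)]
  refine Finset.sum_congr rfl fun i _ => ?_
  rw [MonoidAlgebra.single_mul_single, MonoidAlgebra.single_mul_single, mul_one, one_mul,
    ← hπ i]

lemma isCentral_T (b : G) : IsCentral (T p b) := by
  apply isCentral_SS_of_conj
  intro w
  refine ⟨Equiv.mulLeft w, fun a => ?_⟩
  simp only [Equiv.coe_mulLeft]
  group

lemma isCentral_Ec : IsCentral (Ec p (G := G)) := by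
  apply isCentral_SS_of_conj
  intro w
  refine ⟨Equiv.prodCongr (MulAut.conj w).toEquiv (MulAut.conj w).toEquiv, fun x => ?_⟩
  simp only [Equiv.prodCongr_apply, Prod.map, MulEquiv.toEquiv_eq_coe, EquivLike.coe_coe,
    MulAut.conj_apply]
  rw [commutatorElement_def, commutatorElement_def]
  group


lemma charP_MA : CharP (MonoidAlgebra (ZMod p) G) p := by
  have hinj : Function.Injective (MonoidAlgebra.singleOneRingHom :
      ZMod p →+* MonoidAlgebra (ZMod p) G) := fun a b hab => by
    simpa using congrArg (fun X : MonoidAlgebra (ZMod p) G => X.coeff 1) hab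
  exact charP_of_injective_ringHom hinj p

lemma cc_ext (hp : p.Prime) (hdvd : ¬ p ∣ Fintype.card G) {X Y : MonoidAlgebra (ZMod p) G}
    (hX : IsCC X) (hY : IsCC Y)
    (hsum : ∀ w₀ : G, ∑ w ∈ Cl w₀, X.coeff w = ∑ w ∈ Cl w₀, Y.coeff w) : X = Y := by
  haveI := Fact.mk hp
  ext w
  have key : ∀ Z : MonoidAlgebra (ZMod p) G, IsCC Z →
      ∑ v ∈ Cl w, Z.coeff v = ((Cl w).card : ZMod p) * Z.coeff w := by
    intro Z hZ
    rw [Finset.sum_congr rfl (fun v hv => ?_), Finset.sum_const, nsmul_eq_mul]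
    obtain ⟨u, rfl⟩ := mem_Cl_iff.mp hv
    exact hZ u w
  have hcard : ((Cl w).card : ZMod p) ≠ 0 := by
    rw [Ne, ZMod.natCast_eq_zero_iff]
    intro hdd
    exact hdvd (hdd.trans (card_Cl_dvd w))
  have h1 := hsum w
  rw [key X hX, key Y hY] at h1
  exact mul_left_cancel₀ hcard h1

lemma T_pow (hp : p.Prime) (hdvd : ¬ p ∣ Fintype.card G) (b : G) :
    (T p b) ^ p = T p (b ^ p) := by
  classical
  refine cc_ext hp hdvd ((isCentral_T b).pow p).isCC (isCentral_T (b ^ p)).isCC fun w₀ => ?_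
  rw [T, SS_pow, SS_sum_filter, T, SS_sum_filter]
  have hrot := rot_card hp (fun a : G => a * b * a⁻¹) (fun v => v ∈ Cl w₀)
    (fun u w => Cl_conj_stable u w)
  have hc := (ZMod.natCast_eq_natCast_iff _ _ _).mpr hrot
  rw [hc]
  congr 2
  apply Finset.filter_congr
  intro a _
  simp only [conj_pow]


lemma sum_Tb_eq : ∑ b : G, T p b * T p b⁻¹
    = (Fintype.card G : ZMod p) • Ec p (G := G) := by
  classical
  have step1 : ∀ b : G, T p b * T p b⁻¹
      = ∑ a : G, ∑ w : G, MonoidAlgebra.single (a * ⁅b, w⁆ * a⁻¹) (1 : ZMod p) := by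
    intro b
    rw [T, T, SS, SS, Finset.sum_mul_sum]
    refine Finset.sum_congr rfl fun a _ => ?_
    rw [← Equiv.sum_comp (Equiv.mulLeft a)
      (fun u => MonoidAlgebra.single (a * b * a⁻¹) (1 : ZMod p) *
        MonoidAlgebra.single (u * b⁻¹ * u⁻¹) 1)]
    refine Finset.sum_congr rfl fun w _ => ?_
    rw [MonoidAlgebra.single_mul_single, one_mul]
    congr 1
    simp only [Equiv.coe_mulLeft]
    rw [commutatorElement_def]
    group
  simp_rw [step1]
  rw [Finset.sum_comm]
  have step2 : ∀ a : G, (∑ b : G, ∑ w : G,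
      MonoidAlgebra.single (a * ⁅b, w⁆ * a⁻¹) (1 : ZMod p)) = Ec p (G := G) := by
    intro a
    rw [← Fintype.sum_prod_type']
    rw [Ec, SS]
    rw [← Equiv.sum_comp (Equiv.prodCongr (MulAut.conj a⁻¹).toEquiv (MulAut.conj a⁻¹).toEquiv)
      (fun x : G × G => MonoidAlgebra.single (a * ⁅x.1, x.2⁆ * a⁻¹) (1 : ZMod p))]
    refine Finset.sum_congr rfl fun x _ => ?_
    congr 1
    simp only [Equiv.prodCongr_apply, Prod.map, MulEquiv.toEquiv_eq_coe, EquivLike.coe_coe,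
      MulAut.conj_apply]
    rw [commutatorElement_def, commutatorElement_def]
    group
  simp_rw [step2]
  rw [Finset.sum_const, Finset.card_univ, Nat.cast_smul_eq_nsmul]

lemma sum_pow_central {β : Type} (hp : p.Prime) (s : Finset β)
    (f : β → MonoidAlgebra (ZMod p) G) (hf : ∀ b, IsCentral (f b)) :
    (∑ b ∈ s, f b) ^ p = ∑ b ∈ s, f b ^ p := by
  classical
  haveI := Fact.mk hp
  haveI := charP_MA (G := G) (p := p)
  induction s using Finset.induction with
  | empty => simp [zero_pow hp.ne_zero]
  | insert _ _ hnotmem ih =>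
      rw [Finset.sum_insert hnotmem, Finset.sum_insert hnotmem,
        add_pow_char_of_commute _ ((hf _).commute), ih]

lemma Ec_pow (hp : p.Prime) (hdvd : ¬ p ∣ Fintype.card G) :
    (Ec p (G := G)) ^ p = Ec p := by
  classical
  haveI := Fact.mk hp
  have hcop : (Nat.card G).Coprime p :=
    Nat.Coprime.symm ((Nat.Prime.coprime_iff_not_dvd hp).mpr (by
      rwa [Nat.card_eq_fintype_card]))
  have hsum_pow : (∑ b : G, T p b * T p b⁻¹) ^ p = ∑ b : G, (T p b * T p b⁻¹) ^ p :=
    sum_pow_central hp univ _ (fun b => (isCentral_T b).mul (isCentral_T b⁻¹))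
  have hterm : ∀ b : G, (T p b * T p b⁻¹) ^ p = T p (b ^ p) * T p ((b ^ p)⁻¹) := by
    intro b
    rw [Commute.mul_pow ((isCentral_T (G := G) b).commute (Y := T p b⁻¹))]
    rw [T_pow hp hdvd, T_pow hp hdvd, inv_pow]
  have hre : ∑ b : G, T p (b ^ p) * T p ((b ^ p)⁻¹) = ∑ b : G, T p b * T p b⁻¹ := by
    rw [← Equiv.sum_comp (powCoprime hcop) (fun b => T p b * T p b⁻¹)]
    refine Finset.sum_congr rfl fun b _ => ?_
    simp [powCoprime]
  have key : ((Fintype.card G : ZMod p) • Ec p (G := G)) ^ p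
      = (Fintype.card G : ZMod p) • Ec p (G := G) := by
    rw [← sum_Tb_eq, hsum_pow]
    simp_rw [hterm]
    rw [hre, sum_Tb_eq]
  rw [smul_pow, ZMod.pow_card] at key
  have hcardne : (Fintype.card G : ZMod p) ≠ 0 := by
    rw [Ne, ZMod.natCast_eq_zero_iff]
    exact hdvd
  have := congrArg (fun X => (Fintype.card G : ZMod p)⁻¹ • X) key
  simpa [smul_smul, inv_mul_cancel₀ hcardne] using this


lemma sum_Cl {Z : MonoidAlgebra (ZMod p) G} (hZ : IsCC Z) (w : G) :
    ∑ v ∈ Cl w, Z.coeff v = ((Cl w).card : ZMod p) * Z.coeff w := by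
  rw [Finset.sum_congr rfl (fun v hv => ?_), Finset.sum_const, nsmul_eq_mul]
  obtain ⟨u, rfl⟩ := mem_Cl_iff.mp hv
  exact hZ u w

lemma pow_mem_Cl_pow_iff (hcop : (Nat.card G).Coprime p) (z v : G) :
    v ^ p ∈ Cl (z ^ p) ↔ v ∈ Cl z := by
  simp only [mem_Cl_iff]
  constructor
  · rintro ⟨u, hu⟩
    refine ⟨u, ?_⟩
    apply (powCoprime hcop).injective
    show (u * z * u⁻¹) ^ p = v ^ p
    rw [conj_pow]
    exact hu
  · rintro ⟨u, rfl⟩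
    exact ⟨u, (conj_pow).symm⟩

lemma card_Cl_pow (hcop : (Nat.card G).Coprime p) (z : G) :
    (Cl (z ^ p)).card = (Cl z).card := by
  classical
  symm
  apply Finset.card_bij (fun v _ => v ^ p)
  · intro v hv
    exact (pow_mem_Cl_pow_iff hcop z v).mpr hv
  · intro v₁ _ v₂ _ h
    exact (powCoprime hcop).injective h
  · intro w hw
    obtain ⟨u, hu⟩ := mem_Cl_iff.mp hw
    exact ⟨u * z * u⁻¹, mem_Cl_iff.mpr ⟨u, rfl⟩, by rw [conj_pow]; exact hu⟩

lemma main_congr (hp : p.Prime) (hdvd : ¬ p ∣ Fintype.card G) (g : ℕ) (z : G) :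
    (univ.filter fun f : Fin g → G × G => Pd (fun x : G × G => ⁅x.1, x.2⁆) g f = z).card ≡
    (univ.filter fun f : Fin g → G × G =>
      Pd (fun x : G × G => ⁅x.1, x.2⁆) g f = z ^ p).card [MOD p] := by
  classical
  haveI := Fact.mk hp
  have hcop : (Nat.card G).Coprime p :=
    Nat.Coprime.symm ((Nat.Prime.coprime_iff_not_dvd hp).mpr (by
      rwa [Nat.card_eq_fintype_card]))
  set hE : G × G → G := fun x => ⁅x.1, x.2⁆ with hhE
  set X : MonoidAlgebra (ZMod p) G := (Ec p (G := G)) ^ g with hX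
  have hXSS : X = SS (fun f : Fin g → G × G => Pd hE g f) := by
    rw [hX, Ec, SS_pow]
  have hXp : X ^ p = X := by
    rw [hX, ← pow_mul, mul_comm, pow_mul, Ec_pow hp hdvd]
  have hXcc : IsCC X := (isCentral_Ec.pow g).isCC
  -- class sums
  have h1 : ∑ w ∈ Cl (z ^ p), X.coeff w = ((Cl (z ^ p)).card : ZMod p) * X.coeff (z ^ p) :=
    sum_Cl hXcc (z ^ p)
  have h2 : ∑ w ∈ Cl z, X.coeff w = ((Cl z).card : ZMod p) * X.coeff z := sum_Cl hXcc z
  have h3 : ∑ w ∈ Cl (z ^ p), X.coeff w = ∑ w ∈ Cl z, X.coeff w := by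
    conv_lhs => rw [← hXp]
    rw [hXSS, SS_pow, SS_sum_filter, SS_sum_filter]
    have hrot := rot_card hp (fun f : Fin g → G × G => Pd hE g f)
      (fun v => v ∈ Cl (z ^ p)) (fun u w => Cl_conj_stable u w)
    rw [(ZMod.natCast_eq_natCast_iff _ _ _).mpr hrot]
    congr 2
    apply Finset.filter_congr
    intro f _
    simp only [pow_mem_Cl_pow_iff hcop]
  rw [h1, h2, card_Cl_pow hcop] at h3
  have hcardne : ((Cl z).card : ZMod p) ≠ 0 := by
    rw [Ne, ZMod.natCast_eq_zero_iff]
    intro hdd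
    exact hdvd (hdd.trans (card_Cl_dvd z))
  have h4 : X.coeff (z ^ p) = X.coeff z := mul_left_cancel₀ hcardne h3
  rw [hXSS, SS_apply, SS_apply] at h4
  exact ((ZMod.natCast_eq_natCast_iff _ _ _).mp h4).symm

end Algebra

end CommCount

open CommCount in
/-- For a finite group `G`, `g : ℕ`, `z ∈ G` and `k > 0` coprime to `|G|`, the number of
`2g`-tuples `(a₁,b₁,…,a_g,b_g)` with `[a₁,b₁]⋯[a_g,b_g] = z` equals the number of such
tuples with product of commutators equal to `z ^ k`. -/
theorem commutator_count_eq_of_coprime (G : Type) [Group G] [Fintype G] (g : ℕ) (z : G)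
    (k : ℕ) (hk : 0 < k) (hcop : Nat.Coprime k (Nat.card G)) :
    Nat.card {f : Fin g → G × G // (List.ofFn fun i => ⁅(f i).1, (f i).2⁆).prod = z} =
      Nat.card {f : Fin g → G × G // (List.ofFn fun i => ⁅(f i).1, (f i).2⁆).prod = z ^ k} := by
  classical
  set n := Fintype.card G with hn
  haveI : NeZero n := ⟨Fintype.card_ne_zero⟩
  have hcards : ∀ w : G,
      Nat.card {f : Fin g → G × G // (List.ofFn fun i => ⁅(f i).1, (f i).2⁆).prod = w}
        = (Finset.univ.filter fun f : Fin g → G × G =>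
            Pd (fun x : G × G => ⁅x.1, x.2⁆) g f = w).card := by
    intro w
    rw [Nat.card_eq_fintype_card]
    exact Fintype.card_subtype _
  set N₁ := Nat.card {f : Fin g → G × G // (List.ofFn fun i => ⁅(f i).1, (f i).2⁆).prod = z}
  set N₂ := Nat.card {f : Fin g → G × G //
    (List.ofFn fun i => ⁅(f i).1, (f i).2⁆).prod = z ^ k}
  have hu : IsUnit ((k : ZMod n)) := by
    rw [ZMod.isUnit_iff_coprime]
    rwa [Nat.card_eq_fintype_card] at hcop
  obtain ⟨p, hgt, hp, hmod⟩ :=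
    Nat.forall_exists_prime_gt_and_eq_mod hu (max n (max N₁ N₂))
  have hpn : ¬ p ∣ n := by
    intro hd
    have h1 : p ≤ n := Nat.le_of_dvd (Nat.pos_of_ne_zero (NeZero.ne n)) hd
    have h2 : n < p := lt_of_le_of_lt (le_max_left _ _) hgt
    omega
  have hmodeq : p ≡ k [MOD n] := (ZMod.natCast_eq_natCast_iff _ _ _).mp hmod
  have hzpk : z ^ p = z ^ k := by
    rw [pow_eq_pow_iff_modEq]
    exact hmodeq.of_dvd (orderOf_dvd_card)
  have hcong := main_congr hp hpn g z
  rw [hzpk] at hcong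
  have hc1 : N₁ ≡ N₂ [MOD p] := by
    rw [show N₁ = _ from hcards z, show N₂ = _ from hcards (z ^ k)]
    exact hcong
  have hN₁ : N₁ < p := lt_of_le_of_lt (le_trans (le_max_left _ _) (le_max_right _ _)) hgt
  have hN₂ : N₂ < p := lt_of_le_of_lt (le_trans (le_max_right _ _) (le_max_right _ _)) hgt
  have := hc1
  rw [Nat.ModEq, Nat.mod_eq_of_lt hN₁, Nat.mod_eq_of_lt hN₂] at this
  exact this
end
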